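/- Let I=(0,1) and δ ∈ (0,1) ∪ (1,∞). For any function u : I → ℝ with u, weighted derivative u' ∈ L²_{ρ^{2-δ}}(I), u(1)=0 and lim_{ρ→0⁺} ρ^{1-δ} u(ρ)² = 0, and for any ε₀ with 0 < ε₀ < |1-δ|, one has ∫₀¹ ρ^{-δ} u(ρ)² dρ ≤ (1/(ε₀(|1-δ|-ε₀))) ∫₀¹ ρ^{2-δ} u'(ρ)² dρ. -/

import Mathlib

/-!
On `[a, b] ⊂ (0, 1)` the fundamental theorem of calculus for `ρ ^ (1 - δ) * u ρ ^ 2` gives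
`(1 - δ) ∫ ρ^(-δ) u² = [ρ^(1-δ) u²]ₐᵇ - 2 ∫ ρ^(1-δ) u u'`, and Young's inequality
`2 |ρ^(1-δ) u u'| ≤ ε₀ ρ^(-δ) u² + ε₀⁻¹ ρ^(2-δ) u'²` lets the cross term be absorbed into the
left-hand side, leaving `(|1 - δ| - ε₀) ∫ₐᵇ ρ^(-δ) u²` bounded by the boundary terms plus
`ε₀⁻¹ ∫ₐᵇ ρ^(2-δ) u'²`. The boundary terms vanish as `a → 0⁺`, `b → 1⁻`.
-/

open Real MeasureTheory Set Filter Topology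

theorem tendsto_intervalIntegral_of_integrableOn_Ioo {ι E : Type*} [NormedAddCommGroup E]
    [NormedSpace ℝ E] {μ : Measure ℝ} [NullSingletonClass μ] {f : ℝ → E} {a b : ℝ} (hab : a ≤ b)
    (hf : IntegrableOn f (Ioo a b) μ) {l : Filter ι} {α β : ι → ℝ}
    (hα : Tendsto α l (𝓝[Icc a b] a)) (hβ : Tendsto β l (𝓝[Icc a b] b)) :
    Tendsto (fun i => ∫ x in α i..β i, f x ∂μ) l (𝓝 (∫ x in Ioo a b, f x ∂μ)) := by
  rw [← integral_Ioc_eq_integral_Ioo, ← intervalIntegral.integral_of_le hab]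
  rw [← intervalIntegrable_iff_integrableOn_Ioo_of_le hab] at hf
  rw [← uIcc_of_le hab] at hα hβ
  have hP := intervalIntegral.continuousOn_primitive_interval' hf left_mem_uIcc
  have hlim := ((hP b right_mem_uIcc).tendsto.comp hβ).sub ((hP a left_mem_uIcc).tendsto.comp hα)
  rw [intervalIntegral.integral_same, sub_zero] at hlim
  refine hlim.congr' ?_
  filter_upwards [eventually_mem_of_tendsto_nhdsWithin hα,
    eventually_mem_of_tendsto_nhdsWithin hβ] with i hαi hβi
  exact intervalIntegral.integral_interval_sub_left
    (hf.mono_set (uIcc_subset_uIcc left_mem_uIcc hβi))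
    (hf.mono_set (uIcc_subset_uIcc left_mem_uIcc hαi))

theorem two_mul_abs_rpow_mul_le (δ : ℝ) {ε ρ : ℝ} (hε : 0 < ε) (hρ : 0 < ρ) (x y : ℝ) :
    2 * |ρ ^ (1 - δ) * (x * y)| ≤ ε * (ρ ^ (-δ) * x ^ 2) + ε⁻¹ * (ρ ^ (2 - δ) * y ^ 2) := by
  have hw : 0 ≤ ρ ^ (-δ) := rpow_nonneg hρ.le _
  have h1 : ρ ^ (1 - δ) = ρ ^ (-δ) * ρ := by
    rw [sub_eq_neg_add, rpow_add hρ, rpow_one]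
  have h2 : ρ ^ (2 - δ) = ρ ^ (-δ) * ρ ^ 2 := by
    rw [sub_eq_neg_add, rpow_add hρ, rpow_two]
  calc 2 * |ρ ^ (1 - δ) * (x * y)| = ρ ^ (-δ) * (2 * |x| * |ρ * y|) := by
        rw [h1, abs_mul, abs_mul, abs_mul, abs_mul, abs_of_nonneg hw, abs_of_pos hρ]
        ring
    _ ≤ ρ ^ (-δ) * (ε * |x| ^ 2 + ε⁻¹ * |ρ * y| ^ 2) :=
        mul_le_mul_of_nonneg_left (two_mul_le_add_mul_sq hε) hw
    _ = ε * (ρ ^ (-δ) * x ^ 2) + ε⁻¹ * (ρ ^ (2 - δ) * y ^ 2) := by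
        rw [sq_abs, sq_abs, h2]
        ring

theorem hasDerivAt_rpow_mul_sq (δ : ℝ) {u : ℝ → ℝ} {u' ρ : ℝ} (hρ : 0 < ρ)
    (hu : HasDerivAt u u' ρ) :
    HasDerivAt (fun ρ => ρ ^ (1 - δ) * u ρ ^ 2)
      ((1 - δ) * (ρ ^ (-δ) * u ρ ^ 2) + 2 * (ρ ^ (1 - δ) * (u ρ * u'))) ρ := by
  refine ((hasDerivAt_rpow_const (Or.inl hρ.ne')).mul (hu.fun_pow 2)).congr_deriv ?_
  rw [sub_sub_cancel_left]
  ring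

section WeightedEnergy

variable {δ a b : ℝ} {u u' : ℝ → ℝ}

theorem intervalIntegrable_rpow_mul (e : ℝ) (ha : 0 < a) (hab : a ≤ b) {g : ℝ → ℝ}
    (hg : ContinuousOn g (Icc a b)) : IntervalIntegrable (fun ρ => ρ ^ e * g ρ) volume a b := by
  refine ContinuousOn.intervalIntegrable ?_
  rw [uIcc_of_le hab]
  exact (continuousOn_id.rpow_const fun ρ hρ => Or.inl (ha.trans_le hρ.1).ne').mul hg

theorem integral_rpow_mul_sq_nonneg (e : ℝ) (ha : 0 < a) (hab : a ≤ b) :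
    0 ≤ ∫ ρ in a..b, ρ ^ e * u ρ ^ 2 :=
  intervalIntegral.integral_nonneg hab fun ρ hρ => by have := (ha.trans_le hρ.1).le; positivity

theorem one_sub_mul_integral_rpow_mul_sq_add (ha : 0 < a) (hab : a ≤ b)
    (hu : ∀ ρ ∈ Icc a b, HasDerivAt u (u' ρ) ρ) (hu' : ContinuousOn u' (Icc a b)) :
    (1 - δ) * (∫ ρ in a..b, ρ ^ (-δ) * u ρ ^ 2) + 2 * ∫ ρ in a..b, ρ ^ (1 - δ) * (u ρ * u' ρ) =
      b ^ (1 - δ) * u b ^ 2 - a ^ (1 - δ) * u a ^ 2 := by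
  have hcont : ContinuousOn u (Icc a b) := fun ρ hρ => (hu ρ hρ).continuousAt.continuousWithinAt
  have h₁ := (intervalIntegrable_rpow_mul (-δ) ha hab (hcont.fun_pow 2)).const_mul (1 - δ)
  have h₂ := (intervalIntegrable_rpow_mul (1 - δ) ha hab (hcont.fun_mul hu')).const_mul 2
  rw [← intervalIntegral.integral_const_mul, ← intervalIntegral.integral_const_mul,
    ← intervalIntegral.integral_add h₁ h₂]
  refine intervalIntegral.integral_eq_sub_of_hasDerivAt (f := fun ρ => ρ ^ (1 - δ) * u ρ ^ 2)
    (fun ρ hρ => ?_) (h₁.add h₂)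
  rw [uIcc_of_le hab] at hρ
  exact hasDerivAt_rpow_mul_sq δ (ha.trans_le hρ.1) (hu ρ hρ)

theorem two_mul_abs_integral_rpow_mul_le {ε : ℝ} (hε : 0 < ε) (ha : 0 < a) (hab : a ≤ b)
    (hu : ContinuousOn u (Icc a b)) (hu' : ContinuousOn u' (Icc a b)) :
    2 * |∫ ρ in a..b, ρ ^ (1 - δ) * (u ρ * u' ρ)| ≤
      ε * (∫ ρ in a..b, ρ ^ (-δ) * u ρ ^ 2) + ε⁻¹ * ∫ ρ in a..b, ρ ^ (2 - δ) * u' ρ ^ 2 := by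
  have h₁ := (intervalIntegrable_rpow_mul (-δ) ha hab (hu.fun_pow 2)).const_mul ε
  have h₂ := (intervalIntegrable_rpow_mul (1 - δ) ha hab (hu.fun_mul hu')).const_mul 2
  have h₃ := (intervalIntegrable_rpow_mul (2 - δ) ha hab (hu'.fun_pow 2)).const_mul ε⁻¹
  calc 2 * |∫ ρ in a..b, ρ ^ (1 - δ) * (u ρ * u' ρ)|
      = |∫ ρ in a..b, 2 * (ρ ^ (1 - δ) * (u ρ * u' ρ))| := by
        rw [intervalIntegral.integral_const_mul, abs_mul, abs_two]
    _ ≤ ∫ ρ in a..b, |2 * (ρ ^ (1 - δ) * (u ρ * u' ρ))| :=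
        intervalIntegral.abs_integral_le_integral_abs hab
    _ ≤ ∫ ρ in a..b, (ε * (ρ ^ (-δ) * u ρ ^ 2) + ε⁻¹ * (ρ ^ (2 - δ) * u' ρ ^ 2)) :=
        intervalIntegral.integral_mono_on hab h₂.abs (h₁.add h₃) fun ρ hρ => by
          rw [abs_mul, abs_two]
          exact two_mul_abs_rpow_mul_le δ hε (ha.trans_le hρ.1) _ _
    _ = ε * (∫ ρ in a..b, ρ ^ (-δ) * u ρ ^ 2) + ε⁻¹ * ∫ ρ in a..b, ρ ^ (2 - δ) * u' ρ ^ 2 := by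
        rw [intervalIntegral.integral_add h₁ h₃, intervalIntegral.integral_const_mul,
          intervalIntegral.integral_const_mul]

theorem sub_mul_integral_rpow_mul_sq_le {ε : ℝ} (hε : 0 < ε) (ha : 0 < a) (hab : a ≤ b)
    (hu : ∀ ρ ∈ Icc a b, HasDerivAt u (u' ρ) ρ) (hu' : ContinuousOn u' (Icc a b)) :
    (|1 - δ| - ε) * ∫ ρ in a..b, ρ ^ (-δ) * u ρ ^ 2 ≤
      |b ^ (1 - δ) * u b ^ 2| + |a ^ (1 - δ) * u a ^ 2| +
        ε⁻¹ * ∫ ρ in a..b, ρ ^ (2 - δ) * u' ρ ^ 2 := by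
  have hcont : ContinuousOn u (Icc a b) := fun ρ hρ => (hu ρ hρ).continuousAt.continuousWithinAt
  have hI := one_sub_mul_integral_rpow_mul_sq_add (δ := δ) ha hab hu hu'
  have hY := two_mul_abs_integral_rpow_mul_le (δ := δ) hε ha hab hcont hu'
  have habs : |1 - δ| * ∫ ρ in a..b, ρ ^ (-δ) * u ρ ^ 2 ≤
      |b ^ (1 - δ) * u b ^ 2| + |a ^ (1 - δ) * u a ^ 2| +
        2 * |∫ ρ in a..b, ρ ^ (1 - δ) * (u ρ * u' ρ)| := by
    rw [← abs_of_nonneg (integral_rpow_mul_sq_nonneg (u := u) (-δ) ha hab), ← abs_mul,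
      eq_sub_of_add_eq hI]
    refine (abs_sub _ _).trans ?_
    rw [abs_mul, abs_two]
    gcongr
    exact abs_sub _ _
  linarith

end WeightedEnergy

theorem sub_mul_setIntegral_rpow_mul_sq_le {δ ε : ℝ} {u u' : ℝ → ℝ} (hε : 0 < ε)
    (hu : ∀ ρ ∈ Ioo (0:ℝ) 1, HasDerivAt u (u' ρ) ρ) (hu' : ContinuousOn u' (Ioo (0:ℝ) 1))
    (hu1 : Tendsto u (𝓝[<] 1) (𝓝 0))
    (hu0 : Tendsto (fun ρ => ρ ^ (1 - δ) * u ρ ^ 2) (𝓝[>] 0) (𝓝 0))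
    (hf : IntegrableOn (fun ρ => ρ ^ (-δ) * u ρ ^ 2) (Ioo 0 1))
    (hg : IntegrableOn (fun ρ => ρ ^ (2 - δ) * u' ρ ^ 2) (Ioo 0 1)) :
    (|1 - δ| - ε) * ∫ ρ in Ioo (0:ℝ) 1, ρ ^ (-δ) * u ρ ^ 2 ≤
      ε⁻¹ * ∫ ρ in Ioo (0:ℝ) 1, ρ ^ (2 - δ) * u' ρ ^ 2 := by
  let l := 𝓝[>] (0:ℝ) ×ˢ 𝓝[<] (1:ℝ)
  have hleft : Tendsto Prod.fst l (𝓝[Icc 0 1] 0) :=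
    tendsto_fst.mono_right (nhdsWithin_le_of_mem (Icc_mem_nhdsGT one_pos))
  have hright : Tendsto Prod.snd l (𝓝[Icc 0 1] 1) :=
    tendsto_snd.mono_right (nhdsWithin_le_of_mem (Icc_mem_nhdsLT one_pos))
  have hbound : ∀ᶠ p in l, (|1 - δ| - ε) * ∫ ρ in p.1..p.2, ρ ^ (-δ) * u ρ ^ 2 ≤
      |p.2 ^ (1 - δ) * u p.2 ^ 2| + |p.1 ^ (1 - δ) * u p.1 ^ 2| +
        ε⁻¹ * ∫ ρ in p.1..p.2, ρ ^ (2 - δ) * u' ρ ^ 2 := by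
    filter_upwards [prod_mem_prod (Ioo_mem_nhdsGT (by norm_num : (0:ℝ) < 1 / 2))
      (Ioo_mem_nhdsLT (by norm_num : (1 / 2 : ℝ) < 1))] with ⟨a, b⟩ ⟨ha, hb⟩
    have hsub : Icc a b ⊆ Ioo 0 1 := Icc_subset_Ioo ha.1 hb.2
    exact sub_mul_integral_rpow_mul_sq_le hε ha.1 (by linarith [ha.2, hb.1])
      (fun ρ hρ => hu ρ (hsub hρ)) (hu'.mono hsub)
  have hu1' : Tendsto (fun ρ => ρ ^ (1 - δ) * u ρ ^ 2) (𝓝[<] 1) (𝓝 0) := by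
    simpa using ((continuousAt_rpow_const 1 (1 - δ) (Or.inl one_ne_zero)).tendsto.mono_left
      nhdsWithin_le_nhds).mul (hu1.pow 2)
  have hlim := le_of_tendsto_of_tendsto
    ((tendsto_intervalIntegral_of_integrableOn_Ioo zero_le_one hf hleft hright).const_mul _)
    ((((hu1'.comp tendsto_snd).abs.add (hu0.comp tendsto_fst).abs).add
      ((tendsto_intervalIntegral_of_integrableOn_Ioo zero_le_one hg hleft hright).const_mul _)))
    hbound
  simpa using hlim

theorem stmt0_general (δ : ℝ)
    (u u' : ℝ → ℝ)
    (hderiv : ∀ ρ ∈ Ioo (0:ℝ) 1, HasDerivAt u (u' ρ) ρ)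
    (hcont : ContinuousOn u' (Ioo (0:ℝ) 1))
    (hu1 : Tendsto u (nhdsWithin 1 (Iio (1:ℝ))) (nhds 0))
    (hu0 : Tendsto (fun ρ : ℝ => ρ ^ (1 - δ) * (u ρ) ^ 2)
      (nhdsWithin 0 (Ioi (0:ℝ))) (nhds 0))
    (hint' : IntegrableOn (fun ρ : ℝ => ρ ^ (2 - δ) * (u' ρ) ^ 2) (Ioo 0 1))
    (ε₀ : ℝ) (hε₀ : 0 < ε₀) (hε₀' : ε₀ < |1 - δ|) :
    ∫ ρ in Ioo (0:ℝ) 1, ρ ^ (-δ) * (u ρ) ^ 2 ≤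
      (1 / (ε₀ * (|1 - δ| - ε₀))) * ∫ ρ in Ioo (0:ℝ) 1, ρ ^ (2 - δ) * (u' ρ) ^ 2 := by
  have hK : 0 < |1 - δ| - ε₀ := sub_pos.2 hε₀'
  by_cases hint : IntegrableOn (fun ρ : ℝ => ρ ^ (-δ) * (u ρ) ^ 2) (Ioo 0 1)
  · rw [one_div, le_inv_mul_iff₀ (mul_pos hε₀ hK), mul_assoc]
    calc ε₀ * ((|1 - δ| - ε₀) * ∫ ρ in Ioo (0:ℝ) 1, ρ ^ (-δ) * u ρ ^ 2)
        ≤ ε₀ * (ε₀⁻¹ * ∫ ρ in Ioo (0:ℝ) 1, ρ ^ (2 - δ) * u' ρ ^ 2) :=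
          mul_le_mul_of_nonneg_left
            (sub_mul_setIntegral_rpow_mul_sq_le hε₀ hderiv hcont hu1 hu0 hint hint') hε₀.le
      _ = ∫ ρ in Ioo (0:ℝ) 1, ρ ^ (2 - δ) * u' ρ ^ 2 := mul_inv_cancel_left₀ hε₀.ne' _
  · rw [integral_undef hint]
    exact mul_nonneg (by positivity)
      (setIntegral_nonneg measurableSet_Ioo fun ρ hρ => by have := hρ.1.le; positivity)

/-- Weighted Hardy inequality on (0,1): for `δ ∈ (0,1) ∪ (1,∞)`, a C¹ function `u`
on `(0,1)` with `u 1 = 0`, `ρ^(1-δ) u(ρ)² → 0` as `ρ → 0⁺`, and weighted square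
integrability of `u` and `u'`, and any `0 < ε₀ < |1-δ|`,
`∫₀¹ ρ^(-δ) u² ≤ (ε₀(|1-δ|-ε₀))⁻¹ ∫₀¹ ρ^(2-δ) u'²`. -/
theorem stmt0 (δ : ℝ) (hδ : δ ∈ Ioo (0:ℝ) 1 ∪ Ioi (1:ℝ))
    (u u' : ℝ → ℝ)
    (hderiv : ∀ ρ ∈ Ioo (0:ℝ) 1, HasDerivAt u (u' ρ) ρ)
    (hcont : ContinuousOn u' (Ioo (0:ℝ) 1))
    (hu1 : Tendsto u (nhdsWithin 1 (Iio (1:ℝ))) (nhds 0))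
    (hu0 : Tendsto (fun ρ : ℝ => ρ ^ (1 - δ) * (u ρ) ^ 2)
      (nhdsWithin 0 (Ioi (0:ℝ))) (nhds 0))
    (hint : IntegrableOn (fun ρ : ℝ => ρ ^ (2 - δ) * (u ρ) ^ 2) (Ioo 0 1))
    (hint' : IntegrableOn (fun ρ : ℝ => ρ ^ (2 - δ) * (u' ρ) ^ 2) (Ioo 0 1))
    (ε₀ : ℝ) (hε₀ : 0 < ε₀) (hε₀' : ε₀ < |1 - δ|) :
    ∫ ρ in Ioo (0:ℝ) 1, ρ ^ (-δ) * (u ρ) ^ 2 ≤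
      (1 / (ε₀ * (|1 - δ| - ε₀))) * ∫ ρ in Ioo (0:ℝ) 1, ρ ^ (2 - δ) * (u' ρ) ^ 2 :=
  stmt0_general δ u u' hderiv hcont hu1 hu0 hint' ε₀ hε₀ hε₀'
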